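/- arXiv:1501.06726 — 11 statements merged into one kernel-verified Lean document; each statement's English description precedes it below -/
import Mathlib

section
/- Let m ≥ 2 be an even integer and n ≥ 1. Let c, d ∈ ℝ^n satisfy c_{i_1}+c_{i_2}+⋯+c_{i_m} ≠ 0 for all i_1,…,i_m ∈ {1,…,n} and d_i ≠ 0 for all i ∈ {1,…,n}, and let C be the generalized Cauchy tensor with generating vectors c, d. Then the following statements are equivalent: (i) C is completely decomposable; (ii) C is an SOS tensor; (iii) C is positive semi-definite; (iv) c_i > 0 for all i ∈ {1,…,n}. -/
open Finset

/-- `A x^m = ∑_{i_1,…,i_m} a_{i_1⋯i_m} x_{i_1}⋯x_{i_m}` for an order `m` dimension `n` tensor. -/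
noncomputable def tApply (m n : ℕ) (a : (Fin m → Fin n) → ℝ) (x : Fin n → ℝ) : ℝ :=
  ∑ i : Fin m → Fin n, a i * ∏ j, x (i j)

/-- An (even order) tensor is positive semi-definite if `A x^m ≥ 0` for all `x`. -/
def IsPSD (m n : ℕ) (a : (Fin m → Fin n) → ℝ) : Prop :=
  ∀ x : Fin n → ℝ, 0 ≤ tApply m n a x

/-- Generalized Cauchy tensor with generating vectors `c, d`:
entries `d_{i_1}⋯d_{i_m} / (c_{i_1}+⋯+c_{i_m})`. -/
noncomputable def genCauchy (m n : ℕ) (c d : Fin n → ℝ) : (Fin m → Fin n) → ℝ :=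
  fun i => (∏ j, d (i j)) / (∑ j, c (i j))

/-- A tensor of even order `m` is an SOS tensor if the form `A x^m` is a finite sum of squares
of homogeneous polynomials of degree `m/2`. -/
def IsSOS (m n : ℕ) (a : (Fin m → Fin n) → ℝ) : Prop :=
  ∃ (r : ℕ) (p : Fin r → MvPolynomial (Fin n) ℝ),
    (∀ k, (p k).IsHomogeneous (m / 2)) ∧
    ∀ x : Fin n → ℝ, tApply m n a x = ∑ k, (MvPolynomial.eval x (p k)) ^ 2

/-- A tensor is completely decomposable if it is a finite sum of `m`-th rank-one powers `u^m`. -/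
def IsCompletelyDecomposable (m n : ℕ) (a : (Fin m → Fin n) → ℝ) : Prop :=
  ∃ (r : ℕ) (u : Fin r → Fin n → ℝ), ∀ i, a i = ∑ k, ∏ j, u k (i j)

/-!
(i) ⇒ (ii) ⇒ (iii) is formal: a sum of `m`-th powers of linear forms is a sum of squares of their
`m/2`-th powers. At a basis vector `eᵢ` the form takes the value `dᵢᵐ / (m cᵢ)`, whence
(iii) ⇒ (iv). For (iv) ⇒ (i), `1 / s = ∫₀¹ t ^ (s - 1) dt` writes the tensor as an integral of
rank-one tensors; the finitely many moments involved form a point in the convex hull of a compact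
curve, so Carathéodory's theorem replaces the integral by a finite nonnegative combination.
-/

open MeasureTheory

/-- By Carathéodory, `convexHull K` is a finite union of continuous images of the compact sets
`stdSimplex ℝ (Fin k) × Kᵏ`. -/
theorem IsCompact.convexHull {E : Type*} [NormedAddCommGroup E] [NormedSpace ℝ E]
    [FiniteDimensional ℝ E] {K : Set E} (hK : IsCompact K) : IsCompact (convexHull ℝ K) := by
  have hunion : _root_.convexHull ℝ K = ⋃ k ∈ Finset.range (Module.finrank ℝ E + 2),
      (fun p : (Fin k → ℝ) × (Fin k → E) => ∑ j, p.1 j • p.2 j) ''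
        (stdSimplex ℝ (Fin k) ×ˢ Set.univ.pi fun _ => K) := by
    refine Set.Subset.antisymm (fun x hx => ?_) ?_
    · obtain ⟨κ, _, z, w, hzK, hind, hw0, hw1, rfl⟩ := eq_pos_convex_span_of_mem_convexHull hx
      have hcard : Fintype.card κ < Module.finrank ℝ E + 2 := by
        have := hind.card_le_finrank_succ
        have := Submodule.finrank_le (vectorSpan ℝ (Set.range z))
        omega
      set e := Fintype.equivFin κ
      refine Set.mem_biUnion (Finset.mem_range.2 hcard)
        ⟨(w ∘ e.symm, z ∘ e.symm), ⟨⟨fun j => (hw0 _).le, ?_⟩, fun j _ => hzK ⟨_, rfl⟩⟩, ?_⟩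
      · rw [← hw1]; exact e.symm.sum_comp w
      · exact e.symm.sum_comp fun i => w i • z i
    · simp only [Set.iUnion_subset_iff]
      rintro k - _ ⟨⟨w, z⟩, ⟨hw, hz⟩, rfl⟩
      exact mem_convexHull_of_exists_fintype w z hw.1 hw.2 (fun j => hz j trivial) rfl
  rw [hunion]
  exact (Finset.range _).isCompact_biUnion fun k _ =>
    ((isCompact_stdSimplex _ _).prod (isCompact_univ_pi fun _ => hK)).image (by fun_prop)

theorem exists_nonneg_quadrature_rpow {ι : Type*} [Fintype ι] (p : ι → ℝ) (hp : ∀ i, 0 ≤ p i) :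
    ∃ (κ : Type) (_ : Fintype κ) (w u : κ → ℝ), (∀ k, 0 ≤ w k) ∧ (∀ k, 0 ≤ u k) ∧
      ∀ i, (p i + 1)⁻¹ = ∑ k, w k * u k ^ p i := by
  set γ : ℝ → ι → ℝ := fun t i => t ^ p i
  have hγ : Continuous γ := continuous_pi fun i => Real.continuous_rpow_const (hp i)
  have hmoment : ∫ t in Set.Icc (0 : ℝ) 1, γ t ∈ convexHull ℝ (γ '' Set.Icc 0 1) := by
    have : IsProbabilityMeasure (volume.restrict (Set.Icc (0 : ℝ) 1)) := ⟨by simp⟩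
    exact (convex_convexHull ℝ _).integral_mem (isCompact_Icc.image hγ).convexHull.isClosed
      ((ae_restrict_mem measurableSet_Icc).mono fun t ht => subset_convexHull ℝ _ ⟨t, ht, rfl⟩)
      hγ.integrableOn_Icc
  have hcoord : ∀ i, (∫ t in Set.Icc (0 : ℝ) 1, γ t) i = (p i + 1)⁻¹ := by
    intro i
    rw [eval_integral hγ.integrableOn_Icc.eval, integral_Icc_eq_integral_Ioc,
      ← intervalIntegral.integral_of_le zero_le_one, integral_rpow (Or.inl (by linarith [hp i])),
      Real.one_rpow, Real.zero_rpow (by linarith [hp i]), sub_zero, one_div]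
  obtain ⟨κ, _, w, z, hw0, -, hz, hsum⟩ := mem_convexHull_iff_exists_fintype.1 hmoment
  choose u hu hγu using hz
  refine ⟨κ, inferInstance, w, u, hw0, fun k => (hu k).1, fun i => ?_⟩
  rw [← hcoord i, ← hsum, Finset.sum_apply]
  simp only [Pi.smul_apply, smul_eq_mul, ← hγu, γ]

theorem isCompletelyDecomposable_of_eq_sum {m n : ℕ} {a : (Fin m → Fin n) → ℝ} {κ : Type*}
    [Fintype κ] (u : κ → Fin n → ℝ) (h : ∀ i, a i = ∑ k, ∏ j, u k (i j)) :
    IsCompletelyDecomposable m n a :=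
  ⟨Fintype.card κ, u ∘ (Fintype.equivFin κ).symm, fun i =>
    (h i).trans ((Fintype.equivFin κ).symm.sum_comp fun k => ∏ j, u k (i j)).symm⟩

theorem tApply_eq_sum_pow {m n r : ℕ} {a : (Fin m → Fin n) → ℝ} (u : Fin r → Fin n → ℝ)
    (hu : ∀ i, a i = ∑ k, ∏ j, u k (i j)) (x : Fin n → ℝ) :
    tApply m n a x = ∑ k, (∑ t, u k t * x t) ^ m := by
  simp only [tApply, hu, Finset.sum_mul, Fintype.sum_pow, ← Finset.prod_mul_distrib]
  exact Finset.sum_comm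

theorem IsCompletelyDecomposable.isSOS {m n : ℕ} {a : (Fin m → Fin n) → ℝ} (hm : Even m)
    (h : IsCompletelyDecomposable m n a) : IsSOS m n a := by
  obtain ⟨r, u, hu⟩ := h
  refine ⟨r, fun k => (∑ t, MvPolynomial.C (u k t) * MvPolynomial.X t) ^ (m / 2),
    fun k => ?_, fun x => ?_⟩
  · simpa using (MvPolynomial.IsHomogeneous.sum _ _ 1
      fun t _ => MvPolynomial.isHomogeneous_C_mul_X (u k t) t).pow (m / 2)
  · simp only [tApply_eq_sum_pow u hu, map_pow, map_sum, map_mul, MvPolynomial.eval_C,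
      MvPolynomial.eval_X, ← pow_mul, Nat.div_mul_cancel hm.two_dvd]

theorem IsSOS.isPSD {m n : ℕ} {a : (Fin m → Fin n) → ℝ} (h : IsSOS m n a) : IsPSD m n a := by
  obtain ⟨r, p, -, hp⟩ := h
  intro x
  rw [hp x]
  exact Finset.sum_nonneg fun k _ => sq_nonneg _

theorem tApply_single {m n : ℕ} (a : (Fin m → Fin n) → ℝ) (i : Fin n) :
    tApply m n a (Pi.single i 1) = a fun _ => i := by
  rw [tApply, Finset.sum_eq_single_of_mem (fun _ => i) (Finset.mem_univ _)]
  · simp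
  · intro idx _ hne
    obtain ⟨j, hj⟩ : ∃ j, idx j ≠ i := by
      by_contra! hcon
      exact hne (funext hcon)
    rw [Finset.prod_eq_zero (Finset.mem_univ j) (by simp [hj]), mul_zero]

theorem genCauchy_apply_const (m n : ℕ) (c d : Fin n → ℝ) (i : Fin n) :
    genCauchy m n c d (fun _ => i) = d i ^ m / (m * c i) := by
  simp [genCauchy]

theorem IsPSD.pos_of_genCauchy {m n : ℕ} {c d : Fin n → ℝ} (hm : m ≠ 0) (hme : Even m)
    (h : IsPSD m n (genCauchy m n c d)) {i : Fin n} (hci : c i ≠ 0) (hdi : d i ≠ 0) :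
    0 < c i := by
  have hdm : 0 < d i ^ m := hme.pow_pos hdi
  have hentry := h (Pi.single i 1)
  rw [tApply_single, genCauchy_apply_const] at hentry
  have hmc : 0 ≤ (m : ℝ) * c i := by
    rcases div_nonneg_iff.1 hentry with ⟨-, h⟩ | ⟨h, -⟩
    · exact h
    · exact absurd h hdm.not_ge
  have hm0 : (0 : ℝ) < m := by positivity
  exact pos_of_mul_pos_right (hmc.lt_of_ne' (mul_ne_zero hm0.ne' hci)) hm0.le

/-- With `σ` a positive lower bound of `c` and `aⱼ = cⱼ / σ - 1 / m ≥ 0` one has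
`σ (∑ⱼ a_{iⱼ} + 1) = ∑ⱼ c_{iⱼ}`, so a quadrature rule for the moments `(∑ⱼ a_{iⱼ} + 1)⁻¹` splits
each entry into a nonnegative combination of the products `∏ⱼ d_{iⱼ} t ^ a_{iⱼ}`. -/
theorem isCompletelyDecomposable_genCauchy {m n : ℕ} (hm : m ≠ 0) {c : Fin n → ℝ}
    (hc : ∀ j, 0 < c j) (d : Fin n → ℝ) : IsCompletelyDecomposable m n (genCauchy m n c d) := by
  obtain ⟨σ, hσ, hσc⟩ : ∃ σ > 0, ∀ j, σ ≤ c j := by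
    rcases isEmpty_or_nonempty (Fin n) with _ | _
    · exact ⟨1, one_pos, isEmptyElim⟩
    · obtain ⟨j₀, hj₀⟩ := Finite.exists_min c
      exact ⟨c j₀, hc j₀, hj₀⟩
  set a : Fin n → ℝ := fun j => c j / σ - (m : ℝ)⁻¹
  have ha : ∀ j, 0 ≤ a j := by
    intro j
    have h1 : 1 ≤ c j / σ := (one_le_div hσ).2 (hσc j)
    have h2 : (m : ℝ)⁻¹ ≤ 1 := inv_le_one_of_one_le₀ (by exact_mod_cast Nat.one_le_iff_ne_zero.2 hm)
    simp only [a]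
    linarith
  obtain ⟨κ, _, w, u, hw, hu, hquad⟩ :=
    exists_nonneg_quadrature_rpow (fun i : Fin m → Fin n => ∑ j, a (i j))
      fun i => Finset.sum_nonneg fun j _ => ha (i j)
  refine isCompletelyDecomposable_of_eq_sum
    (fun k j => (w k / σ) ^ ((m : ℝ)⁻¹) * d j * u k ^ a j) fun i => ?_
  have hscale : (∑ j, c (i j))⁻¹ = σ⁻¹ * (∑ j, a (i j) + 1)⁻¹ := by
    have hm' : (m : ℝ) ≠ 0 := Nat.cast_ne_zero.2 hm
    simp only [a, Finset.sum_sub_distrib, ← Finset.sum_div, Finset.sum_const, Finset.card_univ,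
      Fintype.card_fin, nsmul_eq_mul, mul_inv_cancel₀ hm']
    field_simp
    ring
  have hprod : ∀ k, ∏ j, (w k / σ) ^ ((m : ℝ)⁻¹) * d (i j) * u k ^ a (i j)
      = w k / σ * (∏ j, d (i j)) * u k ^ ∑ j, a (i j) := by
    intro k
    rw [Finset.prod_mul_distrib, Finset.prod_mul_distrib, Finset.prod_const, Finset.card_univ,
      Fintype.card_fin, Real.rpow_inv_natCast_pow (div_nonneg (hw k) hσ.le) hm,
      Real.rpow_sum_of_nonneg (hu k) fun j _ => ha (i j)]
  calc genCauchy m n c d i = (∏ j, d (i j)) * σ⁻¹ * ∑ k, w k * u k ^ ∑ j, a (i j) := by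
        rw [genCauchy, div_eq_mul_inv, hscale, hquad, mul_assoc]
    _ = _ := by
        rw [Finset.mul_sum]
        exact Finset.sum_congr rfl fun k _ => by rw [hprod]; ring

theorem stmt_0_general (m n : ℕ) (hm : 2 ≤ m) (hme : Even m)
    (c d : Fin n → ℝ)
    (hc : ∀ i : Fin m → Fin n, ∑ j, c (i j) ≠ 0)
    (hd : ∀ i : Fin n, d i ≠ 0) :
    List.TFAE [IsCompletelyDecomposable m n (genCauchy m n c d),
               IsSOS m n (genCauchy m n c d),
               IsPSD m n (genCauchy m n c d),
               ∀ i : Fin n, 0 < c i] := by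
  have hm0 : m ≠ 0 := by omega
  tfae_have 1 → 2 := IsCompletelyDecomposable.isSOS hme
  tfae_have 2 → 3 := IsSOS.isPSD
  tfae_have 3 → 4 := fun h i => h.pos_of_genCauchy hm0 hme
    (by simpa [hm0] using hc fun _ => i) (hd i)
  tfae_have 4 → 1 := fun h => isCompletelyDecomposable_genCauchy hm0 h d
  tfae_finish

/-- Theorem 3.1: for an even order generalized Cauchy tensor with `d_i ≠ 0` for all `i`,
complete decomposability, the SOS property, positive semi-definiteness and positivity of
the generating vector `c` are all equivalent. -/
theorem stmt_0 (m n : ℕ) (hm : 2 ≤ m) (hme : Even m) (hn : 1 ≤ n)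
    (c d : Fin n → ℝ)
    (hc : ∀ i : Fin m → Fin n, ∑ j, c (i j) ≠ 0)
    (hd : ∀ i : Fin n, d i ≠ 0) :
    List.TFAE [IsCompletelyDecomposable m n (genCauchy m n c d),
               IsSOS m n (genCauchy m n c d),
               IsPSD m n (genCauchy m n c d),
               ∀ i : Fin n, 0 < c i] :=
  stmt_0_general m n hm hme c d hc hd
end

section
/- Let m ≥ 2 and n ≥ 1, let c, d ∈ ℝ^n with c_i > 0 for all i ∈ {1,…,n}, and let C be the generalized Cauchy tensor with generating vectors c, d. Then for every x ∈ ℝ^n, C x^m = ∫_0^1 ( ∑_{i=1}^n t^{c_i − 1/m} d_i x_i )^m dt. -/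
open Finset

/-! Expanding the `m`-th power turns the integrand into a sum over `p : Fin m → Fin n` of monomials
`t ^ (c_{p 1} + ⋯ + c_{p m} - 1) * ∏ j, d (p j) * x (p j)`, the `m` shifts `-1/m` adding up to `-1`;
since `∫₀¹ t ^ (s - 1) dt = 1 / s` for `s > 0`, each monomial integrates to the corresponding
term of `C x^m`. -/

theorem integral_zero_one_rpow_sub_one {s : ℝ} (hs : 0 < s) :
    ∫ t in (0:ℝ)..1, t ^ (s - 1) = 1 / s := by
  rw [integral_rpow (Or.inl (by linarith)), sub_add_cancel, Real.one_rpow,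
    Real.zero_rpow hs.ne', sub_zero]

theorem sum_rpow_mul_pow {ι : Type*} [Fintype ι] {t : ℝ} (ht : 0 < t) (e a : ι → ℝ) (m : ℕ) :
    (∑ i, t ^ e i * a i) ^ m = ∑ p : Fin m → ι, t ^ (∑ j, e (p j)) * ∏ j, a (p j) := by
  rw [sum_pow', Fintype.piFinset_univ]
  refine sum_congr rfl fun p _ => ?_
  rw [Real.rpow_sum_of_pos ht, prod_mul_distrib]

theorem integral_sum_rpow_mul_pow {ι : Type*} [Fintype ι] {m : ℕ} (hm : m ≠ 0) {c : ι → ℝ}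
    (hc : ∀ i, 0 < c i) (a : ι → ℝ) :
    ∫ t in (0:ℝ)..1, (∑ i, t ^ (c i - 1 / (m : ℝ)) * a i) ^ m
      = ∑ p : Fin m → ι, (∏ j, a (p j)) / ∑ j, c (p j) := by
  have hpos (p : Fin m → ι) : 0 < ∑ j, c (p j) :=
    sum_pos (fun j _ => hc (p j)) (univ_nonempty_iff.mpr ⟨⟨0, Nat.pos_of_ne_zero hm⟩⟩)
  have hexp (p : Fin m → ι) : ∑ j, (c (p j) - 1 / (m : ℝ)) = (∑ j, c (p j)) - 1 := by
    rw [sum_sub_distrib, sum_const, card_univ, Fintype.card_fin, nsmul_eq_mul,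
      mul_one_div_cancel (Nat.cast_ne_zero.mpr hm)]
  calc ∫ t in (0:ℝ)..1, (∑ i, t ^ (c i - 1 / (m : ℝ)) * a i) ^ m
      = ∫ t in (0:ℝ)..1, ∑ p : Fin m → ι, t ^ ((∑ j, c (p j)) - 1) * ∏ j, a (p j) := by
        refine intervalIntegral.integral_congr_ae (MeasureTheory.ae_of_all _ fun t ht => ?_)
        rw [Set.uIoc_of_le zero_le_one] at ht
        simp only [sum_rpow_mul_pow ht.1, hexp]
    _ = ∑ p : Fin m → ι, (∫ t in (0:ℝ)..1, t ^ ((∑ j, c (p j)) - 1)) * ∏ j, a (p j) := by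
        rw [intervalIntegral.integral_finsetSum fun p _ =>
          (intervalIntegral.intervalIntegrable_rpow' (by linarith [hpos p])).mul_const _]
        simp only [intervalIntegral.integral_mul_const]
    _ = ∑ p : Fin m → ι, (∏ j, a (p j)) / ∑ j, c (p j) := by
        simp only [integral_zero_one_rpow_sub_one (hpos _), one_div_mul_eq_div]

theorem stmt_1_general (m n : ℕ) (hm : 2 ≤ m)
    (c d : Fin n → ℝ) (hc : ∀ i : Fin n, 0 < c i) (x : Fin n → ℝ) :
    tApply m n (genCauchy m n c d) x
      = ∫ t in (0:ℝ)..1, (∑ i : Fin n, t ^ (c i - 1 / (m : ℝ)) * d i * x i) ^ m := by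
  simp only [mul_assoc]
  rw [integral_sum_rpow_mul_pow (by omega) hc, tApply]
  simp only [genCauchy, prod_mul_distrib, div_mul_eq_mul_div]

/-- The integral representation of a generalized Cauchy tensor with positive generating
vector `c`: `C x^m = ∫_0^1 (∑_i t^{c_i - 1/m} d_i x_i)^m dt`. -/
theorem stmt_1 (m n : ℕ) (hm : 2 ≤ m) (hn : 1 ≤ n)
    (c d : Fin n → ℝ) (hc : ∀ i : Fin n, 0 < c i) (x : Fin n → ℝ) :
    tApply m n (genCauchy m n c d) x
      = ∫ t in (0:ℝ)..1, (∑ i : Fin n, t ^ (c i - 1 / (m : ℝ)) * d i * x i) ^ m :=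
  stmt_1_general m n hm c d hc x
end

section
/- Let m ≥ 2 be an even integer and n ≥ 1. Let C₁ and C₂ be two positive semi-definite Cauchy tensors of order m and dimension n (with generating vectors c, c' ∈ ℝ^n respectively, all of whose index-tuple sums are nonzero). Then the Hadamard product C₁ ∘ C₂ is also positive semi-definite. -/
open Finset

/-- Cauchy tensor with generating vector `c`: entries `1 / (c_{i_1}+⋯+c_{i_m})`. -/
noncomputable def cauchyT (m n : ℕ) (c : Fin n → ℝ) : (Fin m → Fin n) → ℝ :=
  fun i => 1 / (∑ j, c (i j))

/-- If an even order Cauchy tensor is PSD then its generating vector is positive. -/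
lemma cauchy_gen_pos (m n : ℕ) (hm : 2 ≤ m) (c : Fin n → ℝ)
    (hc : ∀ i : Fin m → Fin n, ∑ j, c (i j) ≠ 0)
    (h1 : IsPSD m n (cauchyT m n c)) (k : Fin n) : 0 < c k := by
  have h := h1 (fun j => if j = k then 1 else 0)
  have hmk : (m : ℝ) * c k ≠ 0 := by
    have := hc (fun _ => k)
    simpa [Finset.sum_const, nsmul_eq_mul] using this
  have hval : tApply m n (cauchyT m n c) (fun j => if j = k then 1 else 0)
      = 1 / ((m : ℝ) * c k) := by
    unfold tApply
    have hprod : ∀ i : Fin m → Fin n, (∏ j, (if i j = k then (1:ℝ) else 0))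
        = if i = fun _ => k then 1 else 0 := by
      intro i
      rw [Finset.prod_boole]
      have hiff : (∀ j ∈ Finset.univ, i j = k) ↔ i = fun _ => k := by
        constructor
        · intro hh; funext j; exact hh j (Finset.mem_univ j)
        · intro hh j _; rw [hh]
      simp only [hiff]
    simp only [hprod, mul_ite, mul_one, mul_zero, Finset.sum_ite_eq']
    simp [cauchyT, Finset.sum_const, nsmul_eq_mul]
  rw [hval] at h
  have hpos : 0 < (m : ℝ) * c k := by
    have h1' : (0:ℝ) < 1 / ((m : ℝ) * c k) :=
      lt_of_le_of_ne h (by simpa using (one_div_ne_zero hmk).symm)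
    exact (one_div_pos).mp h1'
  have hm' : (0:ℝ) < m := by positivity
  nlinarith

/-- Corollary 3.2: the Hadamard product of two even order positive semi-definite
Cauchy tensors is positive semi-definite. -/
theorem stmt_4 (m n : ℕ) (hm : 2 ≤ m) (hme : Even m) (hn : 1 ≤ n)
    (c c' : Fin n → ℝ)
    (hc : ∀ i : Fin m → Fin n, ∑ j, c (i j) ≠ 0)
    (hc' : ∀ i : Fin m → Fin n, ∑ j, c' (i j) ≠ 0)
    (h1 : IsPSD m n (cauchyT m n c))
    (h2 : IsPSD m n (cauchyT m n c')) :
    IsPSD m n (fun i => cauchyT m n c i * cauchyT m n c' i) := by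
  intro x
  have hcpos : ∀ k, 0 < c k := fun k => cauchy_gen_pos m n hm c hc h1 k
  have hne : (Finset.univ : Finset (Fin m)).Nonempty := ⟨⟨0, by omega⟩, Finset.mem_univ _⟩
  have ha : ∀ i : Fin m → Fin n, 0 < ∑ j, c (i j) :=
    fun i => Finset.sum_pos (fun j _ => hcpos (i j)) hne
  set g : ℝ → ℝ := fun t => ∑ i : Fin m → Fin n,
    cauchyT m n c' i * (∏ j, x (i j)) * t ^ (∑ j, c (i j) - 1) with hg
  have hint : ∀ i : Fin m → Fin n, IntervalIntegrable
      (fun t : ℝ => cauchyT m n c' i * (∏ j, x (i j)) * t ^ (∑ j, c (i j) - 1))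
      MeasureTheory.volume 0 1 :=
    fun i => (intervalIntegral.intervalIntegrable_rpow' (by linarith [ha i])).const_mul _
  have heq : tApply m n (fun i => cauchyT m n c i * cauchyT m n c' i) x
      = ∫ t in (0:ℝ)..1, g t := by
    rw [hg]
    rw [intervalIntegral.integral_finset_sum (fun i _ => hint i)]
    unfold tApply
    refine Finset.sum_congr rfl fun i _ => ?_
    rw [intervalIntegral.integral_const_mul,
      integral_rpow (Or.inl (by linarith [ha i]))]
    rw [Real.zero_rpow (by linarith [ha i]), Real.one_rpow]
    have hca := hc i
    have hca' := hc' i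
    simp only [cauchyT]
    rw [show (∑ j, c (i j)) - 1 + 1 = ∑ j, c (i j) from by ring, sub_zero]
    field_simp
  rw [heq]
  apply intervalIntegral.integral_nonneg_of_ae_restrict (by norm_num)
  have h0 : ∀ᵐ t : ℝ ∂MeasureTheory.volume, t ≠ 0 := by
    rw [MeasureTheory.ae_iff]
    have : {a : ℝ | ¬ a ≠ 0} = {0} := by ext a; simp
    rw [this]
    exact Real.volume_singleton
  have hconc : ∀ᵐ t ∂(MeasureTheory.volume.restrict (Set.Icc (0:ℝ) 1)), 0 ≤ g t := by
    rw [MeasureTheory.ae_restrict_iff' measurableSet_Icc]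
    filter_upwards [h0] with t htne htm
    have htpos : 0 < t := lt_of_le_of_ne htm.1 (Ne.symm htne)
    have key := h2 (fun k => x k * t ^ c k)
    have hgt : g t = (1/t) * tApply m n (cauchyT m n c') (fun k => x k * t ^ c k) := by
      rw [hg]
      unfold tApply
      rw [Finset.mul_sum]
      refine Finset.sum_congr rfl fun i _ => ?_
      rw [Finset.prod_mul_distrib, ← Real.rpow_sum_of_pos htpos,
        Real.rpow_sub htpos, Real.rpow_one]
      field_simp
    rw [hgt]
    exact mul_nonneg (by positivity) key
  exact hconc
end

section
/- Let m ≥ 2 and n ≥ 1, let c ∈ ℝ^n, and let C be the Cauchy tensor with generating vector c. If all entries of C are nonnegative (equivalently, c_i > 0 for all i ∈ {1,…,n}), then every H-eigenvalue of C is nonnegative; that is, whenever λ ∈ ℝ and x ∈ ℝ^n \ {0} satisfy ∑_{i_2,…,i_m=1}^n x_{i_2}⋯x_{i_m}/(c_i + c_{i_2} + ⋯ + c_{i_m}) = λ x_i^{m−1} for all i ∈ {1,…,n}, then λ ≥ 0. -/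
open Finset

lemma integral_aux {s : ℝ} (hs : 0 < s) :
    ∫ t in Set.Ioc (0:ℝ) 1, t ^ (s - 1) = 1 / s := by
  rw [← intervalIntegral.integral_of_le (by norm_num : (0:ℝ) ≤ 1),
    integral_rpow (Or.inl (by linarith))]
  rw [Real.zero_rpow (by linarith), Real.one_rpow]
  ring_nf

lemma core {ι : Type*} [Fintype ι] (a : ι → ℝ) (s : ι → ℝ) (hs : ∀ i, 0 < s i)
    (h : ∀ u ∈ Set.Ioc (0:ℝ) 1, 0 ≤ ∑ i, a i * u ^ (s i - 1)) :
    0 ≤ ∑ i, a i / s i := by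
  have hint : ∀ i : ι, MeasureTheory.IntegrableOn
      (fun t : ℝ => a i * t ^ (s i - 1)) (Set.Ioc 0 1) := by
    intro i
    exact ((intervalIntegral.intervalIntegrable_rpow'
      (by linarith [hs i] : (-1:ℝ) < s i - 1)).1).const_mul _
  have key : ∑ i, a i / s i
      = ∫ t in Set.Ioc (0:ℝ) 1, ∑ i, a i * t ^ (s i - 1) := by
    rw [MeasureTheory.integral_finset_sum _ (fun i _ => hint i)]
    refine Finset.sum_congr rfl fun i _ => ?_
    rw [MeasureTheory.integral_const_mul, integral_aux (hs i)]
    ring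
  rw [key]
  exact MeasureTheory.setIntegral_nonneg measurableSet_Ioc h

/-- Theorem 3.3: every H-eigenvalue of a nonnegative Cauchy tensor (i.e. with
positive generating vector `c`) is nonnegative. -/
theorem stmt_5 (m n : ℕ) (hm : 2 ≤ m) (hn : 1 ≤ n)
    (c : Fin n → ℝ) (hc : ∀ i : Fin n, 0 < c i)
    (lam : ℝ) (x : Fin n → ℝ) (hx : x ≠ 0)
    (heig : ∀ i : Fin n,
      ∑ t : Fin (m - 1) → Fin n, (∏ j, x (t j)) / (c i + ∑ j, c (t j))
        = lam * x i ^ (m - 1)) :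
    0 ≤ lam := by
  obtain ⟨i₀, hi₀⟩ : ∃ i, x i ≠ 0 := by
    by_contra h
    push_neg at h
    exact hx (funext h)
  have hspos : ∀ (i : Fin n) (t : Fin (m-1) → Fin n), 0 < c i + ∑ j, c (t j) := by
    intro i t
    have : (0:ℝ) ≤ ∑ j, c (t j) := Finset.sum_nonneg fun j _ => (hc (t j)).le
    linarith [hc i]
  -- key pointwise identity on (0,1]
  have hpt : ∀ (i : Fin n) (u : ℝ), u ∈ Set.Ioc (0:ℝ) 1 →
      ∑ t : Fin (m-1) → Fin n,
        (∏ j, x (t j)) * u ^ (c i + ∑ j, c (t j) - 1)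
      = u ^ (c i - 1) * (∑ k, x k * u ^ (c k)) ^ (m - 1) := by
    intro i u hu
    rw [Fintype.sum_pow, Finset.mul_sum]
    refine Finset.sum_congr rfl fun t _ => ?_
    have hu0 : (0:ℝ) < u := hu.1
    rw [show c i + ∑ j, c (t j) - 1 = (c i - 1) + ∑ j, c (t j) by ring,
      Real.rpow_add hu0, Real.rpow_sum_of_pos hu0, ← mul_assoc]
    rw [mul_comm (∏ j, x (t j)) (u ^ (c i - 1)), mul_assoc, ← Finset.prod_mul_distrib]
  rcases Nat.even_or_odd m with hme | hmo
  · -- m even : use λ * ∑ x_i^m ≥ 0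
    have hm1 : m - 1 + 1 = m := by omega
    have hS : 0 < ∑ i, x i ^ m := by
      apply Finset.sum_pos' (fun i _ => hme.pow_nonneg _)
      exact ⟨i₀, Finset.mem_univ _, hme.pow_pos hi₀⟩
    have hmain : 0 ≤ lam * ∑ i, x i ^ m := by
      have : lam * ∑ i, x i ^ m
          = ∑ p : Fin n × (Fin (m-1) → Fin n),
              (x p.1 * ∏ j, x (p.2 j)) / (c p.1 + ∑ j, c (p.2 j)) := by
        rw [Fintype.sum_prod_type, Finset.mul_sum]
        refine Finset.sum_congr rfl fun i _ => ?_
        rw [show x i ^ m = x i * x i ^ (m-1) by rw [← pow_succ', hm1], ← mul_assoc,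
          mul_comm lam (x i), mul_assoc, ← heig i, Finset.mul_sum]
        refine Finset.sum_congr rfl fun t _ => ?_
        ring
      rw [this]
      refine core (fun p : Fin n × (Fin (m-1) → Fin n) => x p.1 * ∏ j, x (p.2 j))
        (fun p => c p.1 + ∑ j, c (p.2 j)) (fun p => hspos p.1 p.2) ?_
      intro u hu
      have hu0 : (0:ℝ) < u := hu.1
      have : ∑ p : Fin n × (Fin (m-1) → Fin n),
          (x p.1 * ∏ j, x (p.2 j)) * u ^ (c p.1 + ∑ j, c (p.2 j) - 1)
          = u⁻¹ * (∑ k, x k * u ^ (c k)) ^ m := by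
        rw [Fintype.sum_prod_type]
        have : ∀ i : Fin n, ∑ t : Fin (m-1) → Fin n,
            (x i * ∏ j, x (t j)) * u ^ (c i + ∑ j, c (t j) - 1)
            = x i * (u ^ (c i - 1) * (∑ k, x k * u ^ (c k)) ^ (m - 1)) := by
          intro i
          rw [← hpt i u hu, Finset.mul_sum]
          exact Finset.sum_congr rfl fun t _ => by ring
        simp_rw [this]
        have h2 : ∀ i : Fin n, x i * (u ^ (c i - 1) * (∑ k, x k * u ^ (c k)) ^ (m - 1))
            = (x i * u ^ (c i)) * (u⁻¹ * (∑ k, x k * u ^ (c k)) ^ (m - 1)) := by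
          intro i
          rw [show c i - 1 = c i + (-1) by ring, Real.rpow_add hu0,
            Real.rpow_neg_one]
          ring
        simp_rw [h2, ← Finset.sum_mul]
        rw [← mul_assoc, mul_comm (∑ i, x i * u ^ (c i)) u⁻¹, mul_assoc,
          ← pow_succ', hm1]
      rw [this]
      have := hme.pow_nonneg (∑ k, x k * u ^ (c k))
      positivity
    nlinarith
  · -- m odd : m - 1 even, λ * x i₀ ^ (m-1) ≥ 0 with x i₀ ^ (m-1) > 0
    have hm1e : Even (m - 1) := by
      rcases hmo with ⟨k, hk⟩
      exact ⟨k, by omega⟩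
    have hpos : 0 < x i₀ ^ (m - 1) := hm1e.pow_pos hi₀
    have h1 : 0 ≤ lam * x i₀ ^ (m - 1) := by
      rw [← heig i₀]
      apply core _ _ (hspos i₀)
      intro u hu
      rw [hpt i₀ u hu]
      have h3 := hm1e.pow_nonneg (∑ k, x k * u ^ (c k))
      have h4 : (0:ℝ) ≤ u ^ (c i₀ - 1) := Real.rpow_nonneg hu.1.le _
      positivity
    nlinarith
end

section
/- Let m ≥ 2 be an even integer and n ≥ 1. Let c, d ∈ ℝ^n satisfy c_{i_1}+⋯+c_{i_m} ≠ 0 for all i_1,…,i_m ∈ {1,…,n}, and let C be the generalized Cauchy tensor with generating vectors c, d. Then C is positive semi-definite if and only if for each i ∈ {1,…,n}, either d_i = 0 (and c_i ≠ 0), or d_i ≠ 0 and c_i > 0. -/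
open Finset

lemma rpow_finset_sum {t : ℝ} (ht : 0 < t) {ι : Type*} (s : Finset ι) (f : ι → ℝ) :
    t ^ (∑ i ∈ s, f i) = ∏ i ∈ s, t ^ (f i) := by
  classical
  induction s using Finset.cons_induction with
  | empty => simp
  | cons a s ha ih => rw [Finset.sum_cons, Finset.prod_cons, Real.rpow_add ht, ih]

/-- An even order generalized Cauchy tensor is positive semi-definite iff for each `i`,
either `d_i = 0` (and `c_i ≠ 0`), or `d_i ≠ 0` and `c_i > 0`. -/
theorem stmt_6 (m n : ℕ) (hm : 2 ≤ m) (hme : Even m) (hn : 1 ≤ n)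
    (c d : Fin n → ℝ)
    (hc : ∀ i : Fin m → Fin n, ∑ j, c (i j) ≠ 0) :
    IsPSD m n (genCauchy m n c d)
      ↔ ∀ i : Fin n, (d i = 0 ∧ c i ≠ 0) ∨ (d i ≠ 0 ∧ 0 < c i) := by
  classical
  have hm0 : (m : ℝ) ≠ 0 := by positivity
  constructor
  · intro hpsd i
    have hci : c i ≠ 0 := by
      have := hc (fun _ => i)
      simp only [Finset.sum_const, Finset.card_univ, Fintype.card_fin, nsmul_eq_mul] at this
      intro h; exact this (by rw [h, mul_zero])
    by_cases hdi : d i = 0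
    · exact Or.inl ⟨hdi, hci⟩
    · refine Or.inr ⟨hdi, ?_⟩
      have hx := hpsd (fun k => if k = i then 1 else 0)
      have hval : tApply m n (genCauchy m n c d) (fun k => if k = i then 1 else 0)
          = (d i) ^ m / ((m : ℝ) * c i) := by
        rw [tApply, Finset.sum_eq_single (fun _ : Fin m => i)]
        · simp [genCauchy, Finset.prod_const, Finset.sum_const]
        · intro b _ hb
          have : ∃ j, b j ≠ i := by
            by_contra h
            push_neg at h
            exact hb (funext h)
          obtain ⟨j, hj⟩ := this
          have : ∏ j', (if b j' = i then (1:ℝ) else 0) = 0 :=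
            Finset.prod_eq_zero (Finset.mem_univ j) (by simp [hj])
          rw [this, mul_zero]
        · simp
      rw [hval] at hx
      have hdm : 0 < (d i) ^ m := by
        have := pow_ne_zero m hdi
        rcases (hme.pow_nonneg (d i)).lt_or_eq with h | h
        · exact h
        · exact absurd h.symm this
      have hmc : 0 < (m : ℝ) * c i := by
        by_contra h
        push_neg at h
        rcases h.lt_or_eq with h | h
        · exact absurd hx (not_le.mpr (div_neg_of_pos_of_neg hdm h))
        · exact (mul_ne_zero hm0 hci) h
      nlinarith [hmc]
  · intro hcd x
    rw [tApply]
    -- the key: each term equals ∫_0^1 coeff * t^(s-1) dt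
    set F : (Fin m → Fin n) → ℝ → ℝ :=
      fun i t => (∏ j, d (i j) * x (i j)) * t ^ ((∑ j, c (i j)) - 1) with hF
    have hpos : ∀ i : Fin m → Fin n, (∏ j, d (i j) * x (i j)) ≠ 0 → 0 < ∑ j, c (i j) := by
      intro i hne
      refine Finset.sum_pos (fun j _ => ?_) ⟨⟨0, lt_of_lt_of_le two_pos hm⟩, Finset.mem_univ _⟩
      have hdj : d (i j) ≠ 0 := by
        intro h
        exact hne (Finset.prod_eq_zero (Finset.mem_univ j) (by rw [h, zero_mul]))
      rcases hcd (i j) with ⟨h0, _⟩ | ⟨_, h⟩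
      · exact absurd h0 hdj
      · exact h
    have hint : ∀ i : Fin m → Fin n, IntervalIntegrable (F i) MeasureTheory.volume 0 1 := by
      intro i
      by_cases h : (∏ j, d (i j) * x (i j)) = 0
      · simp only [hF, h, zero_mul]
        exact intervalIntegrable_const
      · exact (intervalIntegral.intervalIntegrable_rpow' (by linarith [hpos i h])).const_mul _
    have hterm : ∀ i : Fin m → Fin n,
        genCauchy m n c d i * ∏ j, x (i j) = ∫ t in (0:ℝ)..1, F i t := by
      intro i
      by_cases h : (∏ j, d (i j) * x (i j)) = 0
      · simp only [hF, h, zero_mul, intervalIntegral.integral_const, smul_zero]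
        rw [genCauchy, Finset.prod_mul_distrib] at *
        rcases mul_eq_zero.mp h with h' | h'
        · rw [h', zero_div, zero_mul]
        · rw [h', mul_zero]
      · rw [intervalIntegral.integral_const_mul, integral_rpow (Or.inl (by linarith [hpos i h]))]
        simp only [sub_add_cancel, Real.one_rpow]
        rw [Real.zero_rpow (ne_of_gt (hpos i h))]
        rw [genCauchy, div_mul_eq_mul_div, Finset.prod_mul_distrib]
        ring
    rw [Finset.sum_congr rfl (fun i _ => hterm i),
      ← intervalIntegral.integral_finset_sum (fun i _ => hint i)]
    -- now show the integrand is a.e. an even power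
    set G : ℝ → ℝ := fun t => (∑ k, d k * x k * t ^ (c k - 1 / m)) ^ m with hG
    have heq : ∀ t : ℝ, 0 < t → ∑ i : Fin m → Fin n, F i t = G t := by
      intro t ht0
      show _ = (∑ k, d k * x k * t ^ (c k - 1 / m)) ^ m
      have : (∑ k, d k * x k * t ^ (c k - 1 / m)) ^ m
          = ∏ _j : Fin m, ∑ k, d k * x k * t ^ (c k - 1 / m) := by
        rw [Finset.prod_const, Finset.card_univ, Fintype.card_fin]
      rw [this, Finset.prod_univ_sum]
      rw [Fintype.piFinset_univ]
      refine Finset.sum_congr rfl (fun i _ => ?_)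
      show (∏ j, d (i j) * x (i j)) * t ^ ((∑ j, c (i j)) - 1) = _
      have he : ∑ j, (c (i j) - 1 / (m:ℝ)) = (∑ j, c (i j)) - 1 := by
        rw [Finset.sum_sub_distrib, Finset.sum_const, Finset.card_univ, Fintype.card_fin,
          nsmul_eq_mul, mul_one_div, div_self hm0]
      conv_rhs => rw [Finset.prod_mul_distrib]
      rw [← rpow_finset_sum ht0, he]
    rw [intervalIntegral.integral_congr_ae (g := G)
      (Filter.Eventually.of_forall fun t ht => heq t (by
        rw [Set.uIoc_of_le zero_le_one] at ht; exact ht.1))]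
    exact intervalIntegral.integral_nonneg zero_le_one (fun u _ => hme.pow_nonneg _)
end

section
/- Let m ≥ 2 be an even integer and n ≥ 1. Let c, d ∈ ℝ^n satisfy c_{i_1}+⋯+c_{i_m} ≠ 0 for all i_1,…,i_m ∈ {1,…,n}, and let C be the generalized Cauchy tensor with generating vectors c, d. Then C is positive definite if and only if c_1, c_2, …, c_n are positive and mutually distinct, and d_i ≠ 0 for all i ∈ {1,…,n}. -/
open Finset

/-- An (even order) tensor is positive definite if `A x^m > 0` for all nonzero `x`. -/
def IsPD (m n : ℕ) (a : (Fin m → Fin n) → ℝ) : Prop :=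
  ∀ x : Fin n → ℝ, x ≠ 0 → 0 < tApply m n a x

lemma tApply_genCauchy (m n : ℕ) (c d : Fin n → ℝ) (x : Fin n → ℝ) :
    tApply m n (genCauchy m n c d) x
      = ∑ i : Fin m → Fin n, (∏ j, (d (i j) * x (i j))) / (∑ j, c (i j)) := by
  unfold tApply genCauchy
  refine Finset.sum_congr rfl fun i _ => ?_
  rw [Finset.prod_mul_distrib, div_mul_eq_mul_div]

lemma tApply_single_s7 (m n : ℕ) (c d : Fin n → ℝ) (i₀ : Fin n) :
    tApply m n (genCauchy m n c d) (Pi.single i₀ 1)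
      = (d i₀) ^ m / ((m : ℝ) * c i₀) := by
  rw [tApply_genCauchy]
  rw [Finset.sum_eq_single (fun _ : Fin m => i₀)]
  · simp [Finset.prod_const, Finset.sum_const, Finset.card_univ, nsmul_eq_mul]
  · intro i _ hi
    have : ∃ j, i j ≠ i₀ := by
      by_contra h; push_neg at h; exact hi (funext h)
    obtain ⟨j, hj⟩ := this
    rw [div_eq_zero_iff]; left
    exact Finset.prod_eq_zero (Finset.mem_univ j) (by simp [Pi.single_eq_of_ne hj])
  · intro h; exact absurd (Finset.mem_univ _) h

lemma indep_rpow {n : ℕ} (c : Fin n → ℝ) (hinj : Function.Injective c) :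
    ∀ s : Finset (Fin n), ∀ y : Fin n → ℝ,
      (∀ t ∈ Set.Ioo (0:ℝ) 1, ∑ i ∈ s, y i * t ^ (c i) = 0) → ∀ i ∈ s, y i = 0 := by
  intro s
  induction s using Finset.strongInduction with
  | _ s ih =>
    intro y hy i hi
    obtain ⟨i₀, hi₀, hmin⟩ := Finset.exists_min_image s c ⟨i, hi⟩
    have h0 : y i₀ = 0 := by
      have hlim : Filter.Tendsto (fun t : ℝ => ∑ j ∈ s, y j * t ^ (c j - c i₀))
          (nhdsWithin 0 (Set.Ioi 0)) (nhds (∑ j ∈ s, if j = i₀ then y i₀ else 0)) := by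
        apply tendsto_finset_sum
        intro j hj
        by_cases hji : j = i₀
        · subst hji
          simp only [if_pos rfl, sub_self]
          have : (fun t : ℝ => y j * t ^ (0:ℝ)) = fun _ => y j := by
            funext t; rw [Real.rpow_zero, mul_one]
          rw [this]
          exact tendsto_const_nhds
        · simp only [if_neg hji]
          have hpos : 0 < c j - c i₀ :=
            sub_pos.mpr (lt_of_le_of_ne (hmin j hj) (fun h => hji (hinj h.symm)))
          have h1 : Filter.Tendsto (fun t : ℝ => t ^ (c j - c i₀)) (nhds 0) (nhds 0) := by
            have hca := (Real.continuousAt_rpow_const 0 (c j - c i₀) (Or.inr hpos.le))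
            have := hca.tendsto
            rwa [Real.zero_rpow hpos.ne'] at this
          have h2 := (h1.mono_left (nhdsWithin_le_nhds (s := Set.Ioi (0:ℝ)))).const_mul (y j)
          simpa using h2
      have hzero : Filter.Tendsto (fun t : ℝ => ∑ j ∈ s, y j * t ^ (c j - c i₀))
          (nhdsWithin 0 (Set.Ioi 0)) (nhds 0) := by
        apply Filter.Tendsto.congr' _ tendsto_const_nhds
        filter_upwards [Ioo_mem_nhdsGT (by norm_num : (0:ℝ) < 1)] with t ht
        have ht0 : (0:ℝ) < t := ht.1
        have : ∀ j ∈ s, y j * t ^ (c j - c i₀) = (y j * t ^ (c j)) / t ^ (c i₀) := by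
          intro j _
          rw [Real.rpow_sub ht0, mul_div_assoc]
        rw [Finset.sum_congr rfl this, ← Finset.sum_div, hy t ht, zero_div]
      have := tendsto_nhds_unique hzero hlim
      simpa [hi₀] using this.symm
    by_cases hii : i = i₀
    · rw [hii]; exact h0
    · refine ih (s.erase i₀) (Finset.erase_ssubset hi₀) y ?_ i (Finset.mem_erase.mpr ⟨hii, hi⟩)
      intro t ht
      rw [Finset.sum_erase _ (by rw [h0, zero_mul])]
      exact hy t ht


open MeasureTheory intervalIntegral in
lemma key_integral {ι : Type*} [Fintype ι] (P S : ι → ℝ) (hS : ∀ i, 0 < S i)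
    (hnn : ∀ t : ℝ, 0 < t → 0 ≤ ∑ i, P i * t ^ (S i - 1))
    (t₀ : ℝ) (ht₀ : t₀ ∈ Set.Ioo (0:ℝ) 1) (hgt : 0 < ∑ i, P i * t₀ ^ (S i - 1)) :
    0 < ∑ i, P i / S i := by
  set g : ℝ → ℝ := fun t => ∑ i, P i * t ^ (S i - 1) with hg
  have hgint : IntervalIntegrable g volume 0 1 := by
    have h := IntervalIntegrable.sum (μ := volume) (a := 0) (b := 1) Finset.univ
      (f := fun (i : ι) (t : ℝ) => P i * t ^ (S i - 1))
      (fun i _ => (intervalIntegrable_rpow' (by linarith [hS i])).const_mul _)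
    rwa [Finset.sum_fn] at h
  have hval : (∫ t in (0:ℝ)..1, g t) = ∑ i, P i / S i := by
    simp only [hg]
    rw [intervalIntegral.integral_finset_sum
      (fun i (_ : i ∈ Finset.univ) => (intervalIntegrable_rpow' (r := S i - 1)
        (by linarith [hS i])).const_mul (P i))]
    refine Finset.sum_congr rfl fun i _ => ?_
    rw [intervalIntegral.integral_const_mul,
      integral_rpow (Or.inl (by linarith [hS i])), sub_add_cancel,
      Real.one_rpow, Real.zero_rpow (hS i).ne']
    rw [div_eq_mul_inv (P i)]
    norm_num
  have hcont : ContinuousAt g t₀ :=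
    tendsto_finset_sum _ (fun i _ =>
      ((Real.continuousAt_rpow_const t₀ _ (Or.inl ht₀.1.ne')).const_mul _))
  have hev : ∀ᶠ t in nhds t₀, 0 < g t ∧ t ∈ Set.Ioo (0:ℝ) 1 :=
    (hcont.eventually (eventually_gt_nhds hgt)).and
      (Filter.eventually_mem_set.mpr (isOpen_Ioo.mem_nhds ht₀))
  obtain ⟨ε, hε, hball⟩ := Metric.eventually_nhds_iff.mp hev
  set a := t₀ - ε / 2 with ha
  set b := t₀ + ε / 2 with hb
  have hab : a < b := by rw [ha, hb]; linarith
  have hIcc : ∀ t ∈ Set.Icc a b, 0 < g t ∧ t ∈ Set.Ioo (0:ℝ) 1 := by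
    intro t ht
    apply hball
    rw [Real.dist_eq, abs_lt]
    have h1 := ht.1
    have h2 := ht.2
    rw [ha] at h1
    rw [hb] at h2
    constructor <;> linarith
  have ha0 : 0 < a := (hIcc a ⟨le_refl a, hab.le⟩).2.1
  have hb1 : b < 1 := (hIcc b ⟨hab.le, le_refl b⟩).2.2
  have hsub : ∀ u v : ℝ, u ∈ Set.Icc (0:ℝ) 1 → v ∈ Set.Icc (0:ℝ) 1 →
      IntervalIntegrable g volume u v := by
    intro u v hu hv
    apply hgint.mono_set
    rw [Set.uIcc_of_le (by norm_num : (0:ℝ) ≤ 1)]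
    exact Set.uIcc_subset_Icc hu hv
  have haI : a ∈ Set.Icc (0:ℝ) 1 := ⟨ha0.le, by linarith⟩
  have hbI : b ∈ Set.Icc (0:ℝ) 1 := ⟨by linarith, hb1.le⟩
  have h0I : (0:ℝ) ∈ Set.Icc (0:ℝ) 1 := by norm_num
  have h1I : (1:ℝ) ∈ Set.Icc (0:ℝ) 1 := by norm_num
  have hsplit : (∫ t in (0:ℝ)..1, g t)
      = (∫ t in (0:ℝ)..a, g t) + (∫ t in a..b, g t) + (∫ t in b..(1:ℝ), g t) := by
    rw [integral_add_adjacent_intervals (hsub 0 a h0I haI) (hsub a b haI hbI),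
      integral_add_adjacent_intervals (hsub 0 b h0I hbI) (hsub b 1 hbI h1I)]
  have h1 : 0 ≤ ∫ t in (0:ℝ)..a, g t := by
    rw [integral_of_le ha0.le]
    exact setIntegral_nonneg measurableSet_Ioc fun t ht => hnn t ht.1
  have h2 : 0 < ∫ t in a..b, g t :=
    intervalIntegral_pos_of_pos_on (hsub a b haI hbI)
      (fun t ht => (hIcc t (Set.Ioo_subset_Icc_self ht)).1) hab
  have h3 : 0 ≤ ∫ t in b..(1:ℝ), g t := by
    rw [integral_of_le hb1.le]
    exact setIntegral_nonneg measurableSet_Ioc fun t ht =>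
      hnn t (lt_trans (lt_trans ha0 hab) ht.1)
  rw [← hval, hsplit]
  linarith

lemma sum_pow_eq (m n : ℕ) (y c : Fin n → ℝ) (t : ℝ) (ht : 0 < t) :
    ∑ i : Fin m → Fin n, (∏ j, y (i j)) * t ^ ((∑ j, c (i j)) - 1)
      = (∑ k, y k * t ^ (c k)) ^ m * t⁻¹ := by
  rw [Fintype.sum_pow, Finset.sum_mul]
  refine Finset.sum_congr rfl fun i _ => ?_
  have hprod : (∏ j, t ^ (c (i j))) = t ^ (∑ j, c (i j)) := by
    rw [Real.rpow_def_of_pos ht (∑ j, c (i j)), Finset.mul_sum, Real.exp_sum]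
    exact Finset.prod_congr rfl fun j _ => Real.rpow_def_of_pos ht _
  conv_rhs => rw [Finset.prod_mul_distrib, hprod]
  rw [Real.rpow_sub ht, Real.rpow_one, div_eq_mul_inv, mul_assoc]

lemma genCauchy_isPD (m n : ℕ) (hm : 2 ≤ m) (hme : Even m) (c d : Fin n → ℝ)
    (hcpos : ∀ i, 0 < c i) (hcinj : Function.Injective c) (hd : ∀ i, d i ≠ 0) :
    IsPD m n (genCauchy m n c d) := by
  intro x hx
  set y : Fin n → ℝ := fun k => d k * x k with hy
  have hmpos : 0 < m := by omega
  have hspos : ∀ i : Fin m → Fin n, 0 < ∑ j, c (i j) := fun i =>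
    Finset.sum_pos (fun j _ => hcpos (i j)) (Finset.univ_nonempty_iff.mpr ⟨⟨0, hmpos⟩⟩)
  have hnn : ∀ t : ℝ, 0 < t →
      0 ≤ ∑ i : Fin m → Fin n, (∏ j, y (i j)) * t ^ ((∑ j, c (i j)) - 1) := by
    intro t ht
    rw [sum_pow_eq m n y c t ht]
    exact mul_nonneg (hme.pow_nonneg _) (inv_nonneg.mpr ht.le)
  have hex : ∃ t₀ ∈ Set.Ioo (0:ℝ) 1, (∑ k, y k * t₀ ^ (c k)) ≠ 0 := by
    by_contra h
    push_neg at h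
    obtain ⟨k, hk⟩ := Function.ne_iff.mp hx
    have hyk : y k ≠ 0 := mul_ne_zero (hd k) hk
    exact hyk (indep_rpow c hcinj Finset.univ y (fun t ht => h t ht) k (Finset.mem_univ k))
  obtain ⟨t₀, ht₀, hft₀⟩ := hex
  have hgt : 0 < ∑ i : Fin m → Fin n, (∏ j, y (i j)) * t₀ ^ ((∑ j, c (i j)) - 1) := by
    rw [sum_pow_eq m n y c t₀ ht₀.1]
    exact mul_pos (hme.pow_pos hft₀) (inv_pos.mpr ht₀.1)
  rw [tApply_genCauchy]
  exact key_integral (fun i : Fin m → Fin n => ∏ j, y (i j))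
    (fun i => ∑ j, c (i j)) hspos hnn t₀ ht₀ hgt


/-- An even order generalized Cauchy tensor is positive definite iff `c_1,…,c_n` are
positive and mutually distinct and `d_i ≠ 0` for all `i`. -/
theorem stmt_7 (m n : ℕ) (hm : 2 ≤ m) (hme : Even m) (hn : 1 ≤ n)
    (c d : Fin n → ℝ)
    (hc : ∀ i : Fin m → Fin n, ∑ j, c (i j) ≠ 0) :
    IsPD m n (genCauchy m n c d)
      ↔ (∀ i : Fin n, 0 < c i) ∧ Function.Injective c ∧ (∀ i : Fin n, d i ≠ 0) := by
  constructor
  · intro hpd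
    have hm0 : m ≠ 0 := by omega
    have hsingle : ∀ i : Fin n, (Pi.single i (1:ℝ)) ≠ (0 : Fin n → ℝ) := by
      intro i h
      have := congrFun h i
      rw [Pi.single_eq_same] at this
      exact one_ne_zero (this.trans rfl)
    have hd : ∀ i, d i ≠ 0 := by
      intro i hdi
      have h := hpd _ (hsingle i)
      rw [tApply_single_s7] at h
      rw [hdi, zero_pow hm0, zero_div] at h
      exact lt_irrefl 0 h
    have hcpos : ∀ i, 0 < c i := by
      intro i
      have h := hpd _ (hsingle i)
      rw [tApply_single_s7] at h
      have hnum : 0 < d i ^ m := hme.pow_pos (hd i)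
      by_contra hle
      push_neg at hle
      have hci : c i ≠ 0 := by
        intro h0
        apply hc (fun _ => i)
        simp [h0]
      have hneg : (m : ℝ) * c i < 0 :=
        mul_neg_of_pos_of_neg (by positivity) (lt_of_le_of_ne hle hci)
      have := div_neg_of_pos_of_neg hnum hneg
      linarith
    refine ⟨hcpos, ?_, hd⟩
    intro i₁ i₂ hcc
    by_contra hne
    set x : Fin n → ℝ := fun k => if k = i₁ then (d i₁)⁻¹ else if k = i₂ then -(d i₂)⁻¹ else 0
      with hxdef
    have hx : x ≠ 0 := by
      intro h
      have h1 := congrFun h i₁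
      rw [hxdef] at h1
      simp at h1
      exact hd i₁ h1
    have hyx : ∀ k, d k * x k = (if k = i₁ then 1 else 0) - (if k = i₂ then 1 else 0) := by
      intro k
      simp only [hxdef]
      by_cases h1 : k = i₁
      · subst h1
        have hk2 : ¬ k = i₂ := hne
        simp [hk2, hd k]
      · by_cases h2 : k = i₂
        · subst h2
          simp [h1, hd k]
        · simp [h1, h2]
    have hpos := hpd x hx
    rw [tApply_genCauchy] at hpos
    have hterm : ∀ i : Fin m → Fin n, (∏ j, (d (i j) * x (i j))) / (∑ j, c (i j))
        = (∏ j, (d (i j) * x (i j))) * ((m : ℝ) * c i₁)⁻¹ := by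
      intro i
      by_cases hall : ∀ j, i j = i₁ ∨ i j = i₂
      · have hsum : (∑ j, c (i j)) = (m : ℝ) * c i₁ := by
          rw [Finset.sum_congr rfl (fun j _ => show c (i j) = c i₁ by
            rcases hall j with h | h
            · rw [h]
            · rw [h, ← hcc])]
          simp [Finset.sum_const, Finset.card_univ, nsmul_eq_mul]
        rw [hsum, div_eq_mul_inv]
      · push_neg at hall
        obtain ⟨j, hj1, hj2⟩ := hall
        have hz : d (i j) * x (i j) = 0 := by
          rw [hyx, if_neg hj1, if_neg hj2, sub_zero]
        rw [Finset.prod_eq_zero (Finset.mem_univ j) hz, zero_div, zero_mul]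
    rw [Finset.sum_congr rfl (fun i _ => hterm i), ← Finset.sum_mul] at hpos
    have hsum0 : (∑ k, d k * x k) = 0 := by
      rw [Finset.sum_congr rfl (fun k _ => hyx k), Finset.sum_sub_distrib]
      simp
    rw [← Fintype.sum_pow (fun k => d k * x k) m, hsum0, zero_pow hm0, zero_mul] at hpos
    exact lt_irrefl 0 hpos
  · rintro ⟨h1, h2, h3⟩
    exact genCauchy_isPD m n hm hme c d h1 h2 h3
end

section
/- Let m ≥ 2 be an even integer and n ≥ 2, let A be a Hankel tensor of order m and dimension n with generating vector v, and let P be its associated plane tensor. Then P is positive semi-definite (i.e., P y^{(n−1)m} ≥ 0 for all y ∈ ℝ²) if and only if A is Vandermonde positive semi-definite. -/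
open Finset

/-- The Hankel tensor of order `m` and dimension `n` generated by `v`:
entries `a_{i_1⋯i_m} = v_{i_1+⋯+i_m-m}` (indices here are 0-based). -/
def hankelT (m n : ℕ) (v : ℕ → ℝ) : (Fin m → Fin n) → ℝ :=
  fun i => v (∑ j, (i j : ℕ))

/-- `s(k,m,n)`: the number of index tuples `(i_1,…,i_m) ∈ [n]^m` with `i_1+⋯+i_m-m = k`. -/
def sCount (m n k : ℕ) : ℕ :=
  (Finset.univ.filter (fun i : Fin m → Fin n => ∑ j, (i j : ℕ) = k)).card

/-- A tensor is Vandermonde positive semi-definite if `A u^m ≥ 0` for every Vandermonde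
vector `u = (1, μ, μ², …, μ^{n-1})`. -/
def IsVPSD (m n : ℕ) (a : (Fin m → Fin n) → ℝ) : Prop :=
  ∀ μ : ℝ, 0 ≤ tApply m n a (fun l => μ ^ (l : ℕ))

/-- The associated plane tensor of the Hankel tensor generated by `v`:
an order `(n-1)m` dimension `2` tensor with entries `s(k,m,n)·v_k / binom((n-1)m, k)`. -/
noncomputable def planeT (m n : ℕ) (v : ℕ → ℝ) : (Fin ((n - 1) * m) → Fin 2) → ℝ :=
  fun i => (sCount m n (∑ j, (i j : ℕ)) : ℝ) * v (∑ j, (i j : ℕ)) /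
    (Nat.choose ((n - 1) * m) (∑ j, (i j : ℕ)) : ℝ)

/-!
Both `A u^m` at the Vandermonde vector `u = (1, μ, …, μ^{n-1})` and `P w^{(n-1)m}` at
`w = (1, μ)` collapse, after grouping index tuples by their sum `k`, to
`∑ₖ s(k,m,n) v_k μ^k`: for `P` the `binom((n-1)m, k)` tuples with sum `k` cancel the
denominator. So `P` is Vandermonde positive semi-definite exactly when `A` is. In dimension two
this already gives positive semi-definiteness in even order: `P (c·(1, μ))^N = c^N P (1, μ)^N`
reaches every `y` with `y₀ ≠ 0`, and these are dense.
-/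

theorem sum_val_le_mul (m n : ℕ) (i : Fin m → Fin n) : ∑ j, (i j : ℕ) ≤ (n - 1) * m := by
  calc ∑ j, (i j : ℕ) ≤ #(univ : Finset (Fin m)) • (n - 1) :=
        sum_le_card_nsmul _ _ _ fun j _ => Nat.le_sub_one_of_lt (i j).isLt
    _ = (n - 1) * m := by simp [mul_comm]

theorem sum_comp_sum_val {M : Type*} [AddCommMonoid M] (m n : ℕ) (f : ℕ → M) :
    ∑ i : Fin m → Fin n, f (∑ j, (i j : ℕ)) =
      ∑ k ∈ range ((n - 1) * m + 1), sCount m n k • f k := by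
  rw [← sum_fiberwise_of_maps_to (g := fun i : Fin m → Fin n => ∑ j, (i j : ℕ))
    fun i _ => mem_range.mpr (Nat.lt_succ_of_le (sum_val_le_mul m n i))]
  refine sum_congr rfl fun k _ => ?_
  rw [sum_congr rfl fun i hi => congrArg f (mem_filter.mp hi).2, sum_const, sCount]

theorem sCount_two (N k : ℕ) : sCount N 2 k = N.choose k := by
  have hval : ∀ a : Fin 2, (a : ℕ) = if a = 1 then 1 else 0 := by decide
  have hsum (i : Fin N → Fin 2) : ∑ j, (i j : ℕ) = #{j | i j = 1} := by
    rw [card_filter]; exact sum_congr rfl fun j _ => hval (i j)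
  rw [sCount, show N.choose k = #(powersetCard k (univ : Finset (Fin N))) by simp]
  refine card_nbij' (fun i => ({j | i j = 1} : Finset _)) (fun s j => if j ∈ s then 1 else 0)
    (fun i hi => by simp_all) (fun s hs => by simp_all) (fun i _ => ?_) (fun s _ => by ext; simp)
  funext j
  have : ∀ a : Fin 2, (if a = 1 then (1 : Fin 2) else 0) = a := by decide
  simpa using this (i j)

section tApply

variable {m n : ℕ} (a : (Fin m → Fin n) → ℝ)

theorem tApply_vandermonde (μ : ℝ) :
    tApply m n a (fun l => μ ^ (l : ℕ)) = ∑ i, a i * μ ^ ∑ j, (i j : ℕ) := by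
  simp only [tApply, prod_pow_eq_pow_sum]

theorem tApply_const_mul (c : ℝ) (x : Fin n → ℝ) :
    tApply m n a (fun j => c * x j) = c ^ m * tApply m n a x := by
  simp only [tApply, mul_sum, prod_mul_distrib, prod_const, card_univ, Fintype.card_fin]
  exact sum_congr rfl fun i _ => by ring

theorem continuous_tApply : Continuous (tApply m n a) := by
  unfold tApply
  fun_prop

end tApply

theorem isPSD_two_iff_isVPSD {N : ℕ} (hN : Even N) (a : (Fin N → Fin 2) → ℝ) :
    IsPSD N 2 a ↔ IsVPSD N 2 a := by
  refine ⟨fun h μ => h _, fun h => ?_⟩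
  have hpos : ∀ y : Fin 2 → ℝ, y 0 ≠ 0 → 0 ≤ tApply N 2 a y := by
    intro y hy
    have hy_eq : (fun j : Fin 2 => y 0 * (y 1 / y 0) ^ (j : ℕ)) = y := by
      funext j
      fin_cases j
      · simp
      · simp [mul_div_cancel₀ _ hy]
    rw [← hy_eq, tApply_const_mul]
    exact mul_nonneg (hN.pow_nonneg _) (h _)
  have hdense : Dense {y : Fin 2 → ℝ | y 0 ≠ 0} :=
    (dense_compl_singleton (0 : ℝ)).preimage (isOpenMap_eval 0)
  intro y
  exact (isClosed_le continuous_const (continuous_tApply a)).closure_subset_iff.mpr hpos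
    (hdense.closure_eq ▸ Set.mem_univ y)

theorem tApply_hankelT_vandermonde (m n : ℕ) (v : ℕ → ℝ) (μ : ℝ) :
    tApply m n (hankelT m n v) (fun l => μ ^ (l : ℕ)) =
      ∑ k ∈ range ((n - 1) * m + 1), sCount m n k • (v k * μ ^ k) := by
  rw [tApply_vandermonde, ← sum_comp_sum_val m n fun k => v k * μ ^ k]
  rfl

theorem tApply_planeT_vandermonde (m n : ℕ) (v : ℕ → ℝ) (μ : ℝ) :
    tApply ((n - 1) * m) 2 (planeT m n v) (fun l => μ ^ (l : ℕ)) =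
      ∑ k ∈ range ((n - 1) * m + 1), sCount m n k • (v k * μ ^ k) := by
  simp only [tApply_vandermonde, planeT]
  rw [sum_comp_sum_val ((n - 1) * m) 2
      fun k => sCount m n k * v k / ((n - 1) * m).choose k * μ ^ k,
    Nat.add_one_sub_one, one_mul]
  refine sum_congr rfl fun k hk => ?_
  have hchoose : (((n - 1) * m).choose k : ℝ) ≠ 0 :=
    Nat.cast_ne_zero.mpr (Nat.choose_pos (Nat.lt_succ_iff.mp (mem_range.mp hk))).ne'
  rw [sCount_two, nsmul_eq_mul, nsmul_eq_mul]
  field_simp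

theorem stmt_8_general (m n : ℕ) (hme : Even m) (v : ℕ → ℝ) :
    (∀ y : Fin 2 → ℝ, 0 ≤ tApply ((n - 1) * m) 2 (planeT m n v) y)
      ↔ IsVPSD m n (hankelT m n v) := by
  change IsPSD _ _ _ ↔ _
  rw [isPSD_two_iff_isVPSD (hme.mul_left _)]
  refine forall_congr' fun μ => ?_
  rw [tApply_planeT_vandermonde, tApply_hankelT_vandermonde]

/-- Theorem 4.1: for an even order Hankel tensor, the associated plane tensor is
positive semi-definite iff the Hankel tensor is Vandermonde positive semi-definite. -/
theorem stmt_8 (m n : ℕ) (hm : 2 ≤ m) (hme : Even m) (hn : 2 ≤ n) (v : ℕ → ℝ) :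
    (∀ y : Fin 2 → ℝ, 0 ≤ tApply ((n - 1) * m) 2 (planeT m n v) y)
      ↔ IsVPSD m n (hankelT m n v) :=
  stmt_8_general m n hme v
end

section
/- Let A be a Hankel tensor of order m and dimension n with generating vector v, and let P be its associated plane tensor. Then for every y = (y_1, y_2) ∈ ℝ² with y_1 ≠ 0, setting μ = y_2/y_1 and u = (1, μ, μ², …, μ^{n−1}) ∈ ℝ^n, one has P y^{(n−1)m} = y_1^{(n−1)m} · A u^m. -/
open Finset

lemma sum_eq_card {N : ℕ} (i : Fin N → Fin 2) :
    ∑ j, (i j : ℕ) = (univ.filter fun j => i j = 1).card := by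
  rw [Finset.card_filter]
  refine Finset.sum_congr rfl fun j _ => ?_
  have h : ∀ x : Fin 2, (x : ℕ) = if x = 1 then 1 else 0 := by decide
  exact h (i j)

lemma card_tuples (N k : ℕ) :
    (univ.filter fun i : Fin N → Fin 2 => ∑ j, (i j : ℕ) = k).card = N.choose k := by
  classical
  have h := Finset.card_powersetCard k (univ : Finset (Fin N))
  rw [Finset.card_univ, Fintype.card_fin] at h
  rw [← h]
  apply Finset.card_bij (fun i _ => univ.filter fun j => i j = 1)
  · intro i hi
    simp only [Finset.mem_filter, Finset.mem_univ, true_and] at hi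
    rw [Finset.mem_powersetCard_univ, ← sum_eq_card, hi]
  · intro a ha b hb hab
    simp only [Finset.ext_iff, Finset.mem_filter, Finset.mem_univ, true_and] at hab
    funext j
    have h2 : ∀ x y : Fin 2, (x = 1 ↔ y = 1) → x = y := by decide
    exact h2 _ _ (hab j)
  · intro s hs
    rw [Finset.mem_powersetCard_univ] at hs
    refine ⟨fun j => if j ∈ s then 1 else 0, ?_, ?_⟩
    · simp only [Finset.mem_filter, Finset.mem_univ, true_and]
      rw [sum_eq_card, ← hs]
      congr 1
      ext j
      simp only [Finset.mem_filter, Finset.mem_univ, true_and]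
      split <;> simp_all
    · ext j
      simp only [Finset.mem_filter, Finset.mem_univ, true_and]
      split <;> simp_all

lemma prod_fin2 (N : ℕ) (y : Fin 2 → ℝ) (i : Fin N → Fin 2) :
    ∏ j, y (i j) = y 0 ^ (N - ∑ j, (i j : ℕ)) * y 1 ^ (∑ j, (i j : ℕ)) := by
  classical
  have h : ∀ x : Fin 2, y x = if x = 1 then y 1 else y 0 := by
    intro x; fin_cases x <;> simp
  calc ∏ j, y (i j) = ∏ j, (if i j = 1 then y 1 else y 0) := by
        exact Finset.prod_congr rfl fun j _ => h (i j)
    _ = y 1 ^ (univ.filter fun j => i j = 1).card *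
        y 0 ^ (univ.filter fun j => ¬ i j = 1).card := by
        rw [Finset.prod_ite, Finset.prod_const, Finset.prod_const]
    _ = _ := by
        rw [Finset.filter_not, Finset.card_sdiff_of_subset (Finset.filter_subset _ _),
          Finset.card_univ, Fintype.card_fin, ← sum_eq_card, mul_comm]

/-- For `y = (y_1, y_2)` with `y_1 ≠ 0` and `μ = y_2 / y_1`, the associated plane tensor
satisfies `P y^{(n-1)m} = y_1^{(n-1)m} · A u^m`, where `u = (1, μ, …, μ^{n-1})`. -/
theorem stmt_10 (m n : ℕ) (hm : 2 ≤ m) (hn : 2 ≤ n) (v : ℕ → ℝ)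
    (y : Fin 2 → ℝ) (hy : y 0 ≠ 0) :
    tApply ((n - 1) * m) 2 (planeT m n v) y
      = y 0 ^ ((n - 1) * m) *
        tApply m n (hankelT m n v) (fun l => (y 1 / y 0) ^ (l : ℕ)) := by
  classical
  set N := (n - 1) * m with hN
  have hfin2 : ∀ i : Fin N → Fin 2, ∑ j, (i j : ℕ) ≤ N := by
    intro i
    calc ∑ j, (i j : ℕ) ≤ ∑ _j : Fin N, 1 :=
          Finset.sum_le_sum fun j _ => Nat.le_of_lt_succ (i j).isLt
      _ = N := by simp
  have hfinn : ∀ i : Fin m → Fin n, ∑ j, (i j : ℕ) ≤ N := by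
    intro i
    calc ∑ j, (i j : ℕ) ≤ ∑ _j : Fin m, (n - 1) :=
          Finset.sum_le_sum fun j _ => by have := (i j).isLt; omega
      _ = m * (n - 1) := by simp
      _ = N := by rw [hN, mul_comm]
  have hL : tApply N 2 (planeT m n v) y
      = ∑ k ∈ Finset.range (N + 1),
          (N.choose k : ℝ) * ((sCount m n k : ℝ) * v k / (N.choose k : ℝ)) *
            (y 0 ^ (N - k) * y 1 ^ k) := by
    rw [tApply,
      ← Finset.sum_fiberwise_of_maps_to
        (g := fun i : Fin N → Fin 2 => ∑ j, (i j : ℕ)) (t := Finset.range (N + 1))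
        (fun i _ => Finset.mem_range.mpr (Nat.lt_succ_of_le (hfin2 i)))]
    refine Finset.sum_congr rfl fun k hk => ?_
    have : ∀ i ∈ (univ.filter fun i : Fin N → Fin 2 => ∑ j, (i j : ℕ) = k),
        planeT m n v i * ∏ j, y (i j)
          = (sCount m n k : ℝ) * v k / (N.choose k : ℝ) * (y 0 ^ (N - k) * y 1 ^ k) := by
      intro i hi
      simp only [Finset.mem_filter, Finset.mem_univ, true_and] at hi
      rw [planeT, prod_fin2, hi]
    rw [Finset.sum_congr rfl this, Finset.sum_const, card_tuples, nsmul_eq_mul]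
    ring
  have hR : tApply m n (hankelT m n v) (fun l => (y 1 / y 0) ^ (l : ℕ))
      = ∑ k ∈ Finset.range (N + 1), (sCount m n k : ℝ) * (v k * (y 1 / y 0) ^ k) := by
    rw [tApply,
      ← Finset.sum_fiberwise_of_maps_to
        (g := fun i : Fin m → Fin n => ∑ j, (i j : ℕ)) (t := Finset.range (N + 1))
        (fun i _ => Finset.mem_range.mpr (Nat.lt_succ_of_le (hfinn i)))]
    refine Finset.sum_congr rfl fun k hk => ?_
    have : ∀ i ∈ (univ.filter fun i : Fin m → Fin n => ∑ j, (i j : ℕ) = k),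
        hankelT m n v i * ∏ j, ((y 1 / y 0) ^ ((i j : Fin n) : ℕ))
          = v k * (y 1 / y 0) ^ k := by
      intro i hi
      simp only [Finset.mem_filter, Finset.mem_univ, true_and] at hi
      rw [hankelT, Finset.prod_pow_eq_pow_sum, hi]
    rw [Finset.sum_congr rfl this, Finset.sum_const, nsmul_eq_mul]
    rfl
  rw [hL, hR, Finset.mul_sum]
  refine Finset.sum_congr rfl fun k hk => ?_
  rw [Finset.mem_range, Nat.lt_succ_iff] at hk
  have hC : (N.choose k : ℝ) ≠ 0 :=
    Nat.cast_ne_zero.mpr (Nat.choose_pos hk).ne'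
  have hpow : y 0 ^ N = y 0 ^ (N - k) * y 0 ^ k := by
    rw [← pow_add, Nat.sub_add_cancel hk]
  rw [hpow, div_pow]
  field_simp
end

section
/- Let m ≥ 2 be an even integer and let A be a positive semi-definite Hankel tensor of order m and dimension n with a Vandermonde decomposition a_{i_1⋯i_m} = ∑_{k=1}^r α_k (u_k)_{i_1}⋯(u_k)_{i_m}, where α_k ≠ 0 and u_k = (1, μ_k, …, μ_k^{n−1}) with mutually distinct μ_k. If r > n, then the number of indices k ∈ {1,…,r} with α_k > 0 is at least n. -/
open Finset

/-- Proposition 4.1 (ii): if an even order positive semi-definite Hankel tensor has a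
Vandermonde decomposition with `r > n` terms, then at least `n` of the coefficients
`α_k` are positive. -/
theorem stmt_13 (m n r : ℕ) (hm : 2 ≤ m) (hme : Even m) (hn : 1 ≤ n)
    (α : Fin r → ℝ) (μ : Fin r → ℝ)
    (hα : ∀ k, α k ≠ 0) (hμ : Function.Injective μ)
    (hpsd : IsPSD m n (fun i => ∑ k, α k * ∏ j, μ k ^ (i j : ℕ)))
    (hr : n < r) :
    n ≤ (Finset.univ.filter (fun k : Fin r => 0 < α k)).card := by
  by_contra hcon
  push_neg at hcon
  set P : Finset (Fin r) := Finset.univ.filter (fun k : Fin r => 0 < α k) with hP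
  set q : Polynomial ℝ := ∏ k ∈ P, (Polynomial.X - Polynomial.C (μ k)) with hq
  have hdeg : q.natDegree < n := by
    calc q.natDegree ≤ ∑ k ∈ P, (Polynomial.X - Polynomial.C (μ k)).natDegree :=
          Polynomial.natDegree_prod_le _ _
      _ = P.card := by simp [Polynomial.natDegree_X_sub_C]
      _ < n := hcon
  set x : Fin n → ℝ := fun i => q.coeff i with hx
  have heval : ∀ k : Fin r, (∑ s : Fin n, μ k ^ (s : ℕ) * x s) = q.eval (μ k) := by
    intro k
    rw [Polynomial.eval_eq_sum_range' hdeg,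
      Fin.sum_univ_eq_sum_range (fun i => μ k ^ i * q.coeff i) n]
    exact Finset.sum_congr rfl fun i _ => mul_comm _ _
  -- apply value formula
  have key : tApply m n (fun i => ∑ k, α k * ∏ j, μ k ^ (i j : ℕ)) x
      = ∑ k, α k * (q.eval (μ k)) ^ m := by
    unfold tApply
    simp only [Finset.sum_mul]
    rw [Finset.sum_comm]
    refine Finset.sum_congr rfl fun k _ => ?_
    have h1 : (q.eval (μ k)) ^ m = ∏ _j : Fin m, ∑ s : Fin n, μ k ^ (s : ℕ) * x s := by
      rw [Finset.prod_const, Finset.card_univ, Fintype.card_fin, heval k]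
    rw [h1, Finset.prod_univ_sum (fun _ => (univ : Finset (Fin n)))
      (fun j s => μ k ^ (s : ℕ) * x s), Fintype.piFinset_univ, Finset.mul_sum]
    refine Finset.sum_congr rfl fun i _ => ?_
    rw [Finset.prod_mul_distrib, mul_assoc]
  -- evaluate terms
  have hzero : ∀ k ∈ P, α k * (q.eval (μ k)) ^ m = 0 := by
    intro k hk
    have : q.eval (μ k) = 0 := by
      rw [hq, Polynomial.eval_prod]
      exact Finset.prod_eq_zero hk (by simp)
    rw [this, zero_pow (by omega), mul_zero]
  have hneg : ∀ k ∈ Finset.univ.filter (fun k : Fin r => ¬ 0 < α k),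
      α k * (q.eval (μ k)) ^ m < 0 := by
    intro k hk
    simp only [Finset.mem_filter, Finset.mem_univ, true_and] at hk
    have hαk : α k < 0 := lt_of_le_of_ne (not_lt.mp hk) (hα k)
    have hne : q.eval (μ k) ≠ 0 := by
      rw [hq, Polynomial.eval_prod]
      refine Finset.prod_ne_zero_iff.mpr fun t ht => ?_
      have : k ≠ t := fun h => hk (h ▸ (Finset.mem_filter.mp ht).2)
      simp only [Polynomial.eval_sub, Polynomial.eval_X, Polynomial.eval_C, sub_ne_zero]
      exact fun h => this (hμ h)
    have hpow : 0 < (q.eval (μ k)) ^ m := hme.pow_pos hne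
    exact mul_neg_of_neg_of_pos hαk hpow
  -- the complement of P is nonempty
  have hne : (Finset.univ.filter (fun k : Fin r => ¬ 0 < α k)).Nonempty := by
    rw [← Finset.card_pos]
    have := Finset.card_filter_add_card_filter_not
      (s := (Finset.univ : Finset (Fin r))) (p := fun k : Fin r => 0 < α k)
    rw [← hP] at this
    simp only [Finset.card_univ, Fintype.card_fin] at this
    omega
  have hsum : tApply m n (fun i => ∑ k, α k * ∏ j, μ k ^ (i j : ℕ)) x < 0 := by
    rw [key, ← Finset.sum_filter_add_sum_filter_not Finset.univ (fun k : Fin r => 0 < α k)]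
    have h1 : ∑ k ∈ P, α k * (q.eval (μ k)) ^ m = 0 :=
      Finset.sum_eq_zero hzero
    rw [h1, zero_add]
    exact Finset.sum_neg hneg hne
  exact absurd (hpsd x) (not_le.mpr hsum)
end

section
/- Let m ≥ 2 be an even integer and let A be a positive semi-definite Hankel tensor of order m and dimension n with a Vandermonde decomposition a_{i_1⋯i_m} = ∑_{k=1}^r α_k (u_k)_{i_1}⋯(u_k)_{i_m}, where α_k ≠ 0 and u_k = (1, μ_k, …, μ_k^{n−1}) with mutually distinct μ_k. If r ≤ n, then α_k > 0 for all k ∈ {1,…,r}. -/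
open Finset
open Matrix

/-- Proposition 4.1 (iii): if an even order positive semi-definite Hankel tensor has a
Vandermonde decomposition with `r ≤ n` terms, then all the coefficients `α_k` are
positive. -/
theorem stmt_14 (m n r : ℕ) (hm : 2 ≤ m) (hme : Even m) (hn : 1 ≤ n)
    (α : Fin r → ℝ) (μ : Fin r → ℝ)
    (hα : ∀ k, α k ≠ 0) (hμ : Function.Injective μ)
    (hpsd : IsPSD m n (fun i => ∑ k, α k * ∏ j, μ k ^ (i j : ℕ)))
    (hr : r ≤ n) :
    ∀ k : Fin r, 0 < α k := by
  intro l
  -- the Vandermonde matrix is invertible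
  set V : Matrix (Fin r) (Fin r) ℝ := Matrix.vandermonde μ with hVdef
  have hV : IsUnit V.det := by
    rw [hVdef, Matrix.det_vandermonde]
    refine isUnit_iff_ne_zero.mpr (Finset.prod_ne_zero_iff.mpr fun i _ => ?_)
    refine Finset.prod_ne_zero_iff.mpr fun j hj => ?_
    have hij : i < j := Finset.mem_Ioi.mp hj
    exact sub_ne_zero.mpr fun h => absurd (hμ h) (ne_of_gt hij)
  -- solve V y = e_l
  set y : Fin r → ℝ := V⁻¹ *ᵥ Pi.single l 1 with hy
  have hVy : V *ᵥ y = Pi.single l 1 := by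
    rw [hy, Matrix.mulVec_mulVec, Matrix.mul_nonsing_inv _ hV, Matrix.one_mulVec]
  -- extend y by zeros
  set x : Fin n → ℝ := fun i => if h : (i : ℕ) < r then y ⟨i, h⟩ else 0 with hx
  have key : ∀ k : Fin r, ∑ i : Fin n, μ k ^ (i : ℕ) * x i = if k = l then 1 else 0 := by
    intro k
    have h1 : ∑ i : Fin n, μ k ^ (i : ℕ) * x i
        = ∑ i ∈ Finset.range n, μ k ^ i * (if h : i < r then y ⟨i, h⟩ else 0) :=
      Fin.sum_univ_eq_sum_range (fun i => μ k ^ i * (if h : i < r then y ⟨i, h⟩ else 0)) n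
    have h2 : ∑ i ∈ Finset.range n, μ k ^ i * (if h : i < r then y ⟨i, h⟩ else 0)
        = ∑ i ∈ Finset.range r, μ k ^ i * (if h : i < r then y ⟨i, h⟩ else 0) := by
      refine (Finset.sum_subset (Finset.range_subset_range.mpr hr) fun i _ hi => ?_).symm
      rw [Finset.mem_range, not_lt] at hi
      rw [dif_neg (by omega), mul_zero]
    have h3 : ∑ i ∈ Finset.range r, μ k ^ i * (if h : i < r then y ⟨i, h⟩ else 0)
        = ∑ j : Fin r, μ k ^ (j : ℕ) * y j := by
      rw [← Fin.sum_univ_eq_sum_range (fun i => μ k ^ i * (if h : i < r then y ⟨i, h⟩ else 0)) r]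
      exact Finset.sum_congr rfl fun j _ => by rw [dif_pos j.isLt]
    have h4 : ∑ j : Fin r, μ k ^ (j : ℕ) * y j = (V *ᵥ y) k := by
      simp [Matrix.mulVec, dotProduct, hVdef, Matrix.vandermonde]
    rw [h1, h2, h3, h4, hVy, Pi.single_apply]
  -- compute A x^m
  have hcomp : tApply m n (fun i => ∑ k, α k * ∏ j, μ k ^ (i j : ℕ)) x = α l := by
    unfold tApply
    have step : ∀ i : Fin m → Fin n,
        (∑ k, α k * ∏ j, μ k ^ (i j : ℕ)) * ∏ j, x (i j)
        = ∑ k, α k * ∏ j, μ k ^ (i j : ℕ) * x (i j) := by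
      intro i
      rw [Finset.sum_mul]
      refine Finset.sum_congr rfl fun k _ => ?_
      rw [mul_assoc, ← Finset.prod_mul_distrib]
    calc ∑ i : Fin m → Fin n, (∑ k, α k * ∏ j, μ k ^ (i j : ℕ)) * ∏ j, x (i j)
        = ∑ i : Fin m → Fin n, ∑ k, α k * ∏ j, μ k ^ (i j : ℕ) * x (i j) :=
          Finset.sum_congr rfl fun i _ => step i
      _ = ∑ k, α k * ∑ i : Fin m → Fin n, ∏ j, μ k ^ (i j : ℕ) * x (i j) := by
          rw [Finset.sum_comm]
          exact Finset.sum_congr rfl fun k _ => by rw [Finset.mul_sum]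
      _ = ∑ k, α k * (∑ i : Fin n, μ k ^ (i : ℕ) * x i) ^ m := by
          refine Finset.sum_congr rfl fun k _ => ?_
          congr 1
          rw [← Fin.prod_const m (∑ i : Fin n, μ k ^ (i : ℕ) * x i),
            Finset.prod_univ_sum]
          rfl
      _ = ∑ k, α k * ((if k = l then 1 else 0 : ℝ)) ^ m := by
          refine Finset.sum_congr rfl fun k _ => by rw [key k]
      _ = α l := by
          have hm0 : m ≠ 0 := by omega
          rw [Finset.sum_congr rfl (fun k _ => ?_), Finset.sum_ite_eq' univ l α]
          · simp
          · by_cases h : k = l <;> simp [h, zero_pow hm0]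
  have h0 : 0 ≤ α l := hcomp ▸ hpsd x
  exact lt_of_le_of_ne h0 (Ne.symm (hα l))
end

section
/- Let A be the Hankel tensor of order 4 and dimension 3 with generating vector v = (v_0,…,v_8) given by v_0 = 1, v_1 = −1, v_2 = 1, and v_3 = v_4 = ⋯ = v_8 = 0. Then A is Vandermonde positive semi-definite (A u^4 ≥ 0 for every Vandermonde vector u = (1, μ, μ²)), but A is not positive semi-definite; in particular, for x = (1, 1, −1) one has A x^4 = −1 < 0. -/
open Finset

theorem Fin.sum_univ_succ_pi {β M : Type*} [Fintype β] [AddCommMonoid M] {n : ℕ}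
    (g : (Fin (n + 1) → β) → M) :
    ∑ f : Fin (n + 1) → β, g f = ∑ b : β, ∑ f : Fin n → β, g (Fin.cons b f) := by
  rw [← Fintype.sum_prod_type']
  exact (Fintype.sum_equiv (Fin.consEquiv fun _ => β) _ _ fun _ => rfl).symm

/-- Only index tuples with `i₁ + ⋯ + i₄ ≤ 2` see a nonzero entry, which leaves four monomials. -/
theorem tApply_hankelT_example (x : Fin 3 → ℝ) :
    tApply 4 3 (hankelT 4 3
        (fun k => if k = 0 then 1 else if k = 1 then -1 else if k = 2 then 1 else 0)) x
      = x 0 ^ 4 - 4 * x 0 ^ 3 * x 1 + 6 * x 0 ^ 2 * x 1 ^ 2 + 4 * x 0 ^ 3 * x 2 := by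
  simp only [tApply, hankelT, Fin.sum_univ_succ_pi, Fin.prod_univ_succ, Fin.prod_univ_zero,
    Fin.sum_univ_succ, Fin.sum_univ_zero, Fin.cons_zero, Fin.cons_succ]
  norm_num
  ring

/-- Example 4.1: the order 4, dimension 3 Hankel tensor generated by
`v = (1, -1, 1, 0, …, 0)` is Vandermonde positive semi-definite but not positive
semi-definite; in particular `A x^4 = -1` for `x = (1, 1, -1)`. -/
theorem stmt_17 :
    IsVPSD 4 3 (hankelT 4 3 (fun k => if k = 0 then 1 else if k = 1 then -1 else if k = 2 then 1 else 0)) ∧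
    ¬ IsPSD 4 3 (hankelT 4 3 (fun k => if k = 0 then 1 else if k = 1 then -1 else if k = 2 then 1 else 0)) ∧
    tApply 4 3 (hankelT 4 3 (fun k => if k = 0 then 1 else if k = 1 then -1 else if k = 2 then 1 else 0)) ![1, 1, -1] = -1 := by
  have value_at_witness : tApply 4 3 (hankelT 4 3
      (fun k => if k = 0 then 1 else if k = 1 then -1 else if k = 2 then 1 else 0)) ![1, 1, -1]
      = -1 := by
    simp [tApply_hankelT_example]
    norm_num
  refine ⟨fun μ => ?_, fun hPSD => ?_, value_at_witness⟩
  · -- on `(1, μ, μ²)` the form is `1 - 4μ + 10μ² = 10 (μ - 1/5)² + 3/5`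
    rw [tApply_hankelT_example]
    norm_num
    nlinarith [sq_nonneg (5 * μ - 1)]
  · linarith [hPSD ![1, 1, -1]]
end
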